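/- arXiv:2007.11878 — 2 statements merged into one kernel-verified Lean document; each statement's English description precedes it below -/
import Mathlib

section
/- Let $0 < \overline{\varrho} < \infty$, $p \in C^1[0, \overline{\varrho})$ with $p' > 0$ on $(0,\overline{\varrho})$, and let $P$ satisfy $P'(\varrho)\varrho - P(\varrho) = p(\varrho)$. Fix $0 < \underline{\varrho} < \overline{\varrho}$. Then for all $\varrho \in (\underline{\varrho}, \overline{\varrho})$, $P(\varrho) \leq P(\underline{\varrho}) + \overline{\varrho}\,\big|P'(\underline{\varrho}) - p(\underline{\varrho})/\underline{\varrho}\big| + \frac{\overline{\varrho}}{\underline{\varrho}^2}(\overline{\varrho} - \underline{\varrho})\, p(\varrho)$. -/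
/-!
Since `P' x * x - P x = p x`, the quotient `P x / x` has derivative `p x / x ^ 2`. On
`[r0, r]` the monotone, nonnegative `p` makes this at most `p r / r0 ^ 2`, so the mean value
inequality gives `P r / r ≤ P r0 / r0 + p r / r0 ^ 2 * (r - r0)`. Multiplying by `r < ϱbar`
and using `P' r0 - p r0 / r0 = P r0 / r0` yields the bound.
-/

open Set

lemma monotoneOn_Ioo_of_hasDerivAt_nonneg {f f' : ℝ → ℝ} {a b : ℝ}
    (hf : ∀ x ∈ Ioo a b, HasDerivAt f (f' x) x) (hf' : ∀ x ∈ Ioo a b, 0 ≤ f' x) :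
    MonotoneOn f (Ioo a b) := by
  refine monotoneOn_of_hasDerivWithinAt_nonneg (f' := f') (convex_Ioo a b)
    (fun x hx => (hf x hx).continuousAt.continuousWithinAt) ?_ ?_ <;> rw [interior_Ioo]
  · exact fun x hx => (hf x hx).hasDerivWithinAt
  · exact hf'

lemma sub_le_mul_sub_of_hasDerivAt_le {f f' : ℝ → ℝ} {a b C : ℝ} (hab : a ≤ b)
    (hf : ∀ x ∈ Icc a b, HasDerivAt f (f' x) x) (hC : ∀ x ∈ Ioo a b, f' x ≤ C) :
    f b - f a ≤ C * (b - a) := by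
  refine (convex_Icc a b).image_sub_le_mul_sub_of_deriv_le
    (fun x hx => (hf x hx).continuousAt.continuousWithinAt) ?_ ?_ a (left_mem_Icc.2 hab) b
    (right_mem_Icc.2 hab) hab
  · rw [interior_Icc]
    exact fun x hx => (hf x (Ioo_subset_Icc_self hx)).differentiableAt.differentiableWithinAt
  · rw [interior_Icc]
    exact fun x hx => (hf x (Ioo_subset_Icc_self hx)).deriv ▸ hC x hx

lemma hasDerivAt_div_self_of_mul_sub_eq {P : ℝ → ℝ} {x P'x c : ℝ} (hP : HasDerivAt P P'x x)
    (hx : x ≠ 0) (h : P'x * x - P x = c) : HasDerivAt (fun y => P y / y) (c / x ^ 2) x :=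
  (hP.div (hasDerivAt_id' x) hx).congr_deriv (by rw [mul_one, h])

lemma div_le_div_add_mul_sub_of_mul_sub_eq {p P P' : ℝ → ℝ} {a b : ℝ} (ha : 0 < a)
    (hab : a ≤ b) (hP : ∀ x ∈ Icc a b, HasDerivAt P (P' x) x)
    (hPp : ∀ x ∈ Icc a b, P' x * x - P x = p x) (hp : MonotoneOn p (Icc a b)) (hpb : 0 ≤ p b) :
    P b / b ≤ P a / a + p b / a ^ 2 * (b - a) := by
  have hderiv : ∀ x ∈ Icc a b, HasDerivAt (fun y => P y / y) (p x / x ^ 2) x := fun x hx =>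
    hasDerivAt_div_self_of_mul_sub_eq (hP x hx) (ha.trans_le hx.1).ne' (hPp x hx)
  have hbound : ∀ x ∈ Ioo a b, p x / x ^ 2 ≤ p b / a ^ 2 := fun x hx =>
    div_le_div₀ hpb (hp (Ioo_subset_Icc_self hx) (right_mem_Icc.2 hab) hx.2.le) (by positivity)
      (pow_le_pow_left₀ ha.le hx.1.le 2)
  linarith [sub_le_mul_sub_of_hasDerivAt_le hab hderiv hbound]

theorem stmt1_general (ϱbar : ℝ)
    (p p' P P' : ℝ → ℝ)
    (hpd : ∀ x ∈ Ioo 0 ϱbar, HasDerivAt p (p' x) x)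
    (hppos : ∀ x ∈ Ioo 0 ϱbar, 0 < p' x)
    (hpnn : ∀ x ∈ Ioo 0 ϱbar, 0 ≤ p x)
    (hPd : ∀ x ∈ Ioo 0 ϱbar, HasDerivAt P (P' x) x)
    (hODE : ∀ x ∈ Ioo 0 ϱbar, P' x * x - P x = p x)
    (r0 : ℝ) (h0 : 0 < r0) (h0' : r0 < ϱbar) :
    ∀ r ∈ Ioo r0 ϱbar,
      P r ≤ P r0 + ϱbar * |P' r0 - p r0 / r0| + ϱbar / r0 ^ 2 * (ϱbar - r0) * p r := by
  rintro r ⟨hr0r, hrϱ⟩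
  have hsub : Icc r0 r ⊆ Ioo 0 ϱbar := fun x hx => ⟨h0.trans_le hx.1, hx.2.trans_lt hrϱ⟩
  have hpr : 0 ≤ p r := hpnn r (hsub (right_mem_Icc.2 hr0r.le))
  have hpmono : MonotoneOn p (Ioo 0 ϱbar) :=
    monotoneOn_Ioo_of_hasDerivAt_nonneg hpd fun x hx => (hppos x hx).le
  have key := div_le_div_add_mul_sub_of_mul_sub_eq h0 hr0r.le (fun x hx => hPd x (hsub hx))
    (fun x hx => hODE x (hsub hx)) (hpmono.mono hsub) hpr
  have hP'r0 : P' r0 - p r0 / r0 = P r0 / r0 := by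
    rw [← hODE r0 ⟨h0, h0'⟩]
    field_simp
    ring
  have hlin : (r - r0) * (P r0 / r0) ≤ ϱbar * |P r0 / r0| :=
    (mul_le_mul_of_nonneg_left (le_abs_self _) (by linarith)).trans
      (mul_le_mul_of_nonneg_right (by linarith) (abs_nonneg _))
  calc P r = r * (P r / r) := (mul_div_cancel₀ _ (h0.trans hr0r).ne').symm
    _ ≤ r * (P r0 / r0 + p r / r0 ^ 2 * (r - r0)) := by gcongr; linarith
    _ = P r0 + (r - r0) * (P r0 / r0) + r * (r - r0) * (p r / r0 ^ 2) := by field_simp; ring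
    _ ≤ P r0 + ϱbar * |P r0 / r0| + ϱbar * (ϱbar - r0) * (p r / r0 ^ 2) := by
      gcongr
      linarith
    _ = P r0 + ϱbar * |P' r0 - p r0 / r0| + ϱbar / r0 ^ 2 * (ϱbar - r0) * p r := by
      rw [hP'r0]
      ring

theorem stmt1 (ϱbar : ℝ) (hϱ : 0 < ϱbar)
    (p p' P P' : ℝ → ℝ)
    (hpc : ContinuousOn p (Ico 0 ϱbar))
    (hpd : ∀ x ∈ Ioo 0 ϱbar, HasDerivAt p (p' x) x)
    (hppos : ∀ x ∈ Ioo 0 ϱbar, 0 < p' x)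
    (hpnn : ∀ x ∈ Ioo 0 ϱbar, 0 ≤ p x)
    (hPd : ∀ x ∈ Ioo 0 ϱbar, HasDerivAt P (P' x) x)
    (hODE : ∀ x ∈ Ioo 0 ϱbar, P' x * x - P x = p x)
    (r0 : ℝ) (h0 : 0 < r0) (h0' : r0 < ϱbar) :
    ∀ r ∈ Ioo r0 ϱbar,
      P r ≤ P r0 + ϱbar * |P' r0 - p r0 / r0| + ϱbar / r0 ^ 2 * (ϱbar - r0) * p r :=
  stmt1_general ϱbar p p' P P' hpd hppos hpnn hPd hODE r0 h0 h0'
end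

section
/- Suppose $y : [0,\infty) \to [0,\infty)$ and $h : [0,\infty) \to [0,\infty)$ (locally integrable) satisfy, for a.e. $T \geq 0$ and all $\tau \geq 0$, $y(T+\tau) - y(T) + \kappa \int_T^{T+\tau} h(t)\, dt \leq \omega \tau$ for constants $\kappa, \omega > 0$, together with the coercivity $h(t) \geq \alpha\, y(t) - \beta$ for a.e. $t$ and constants $\alpha > 0$, $\beta \geq 0$. Then $\limsup_{t \to \infty} y(t) \leq \mathcal{E}_\infty$ and $\limsup_{T\to\infty} \int_T^{T+1} h(t)\, dt \leq \mathcal{E}_\infty'$, where $\mathcal{E}_\infty, \mathcal{E}_\infty'$ depend only on $\kappa, \omega, \alpha, \beta$ and not on $y(0)$. -/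
/-!
Discretize at integer steps. On a unit interval `[s, s + 1]` such that the energy inequality holds
from `s` and from a.e. later time, it bounds `y (s + 1)` by `y t + ω` for a.e. `t` in the interval,
so coercivity gives `∫ₛ^{s+1} h ≥ α (y (s + 1) - ω) - β`; fed back into the energy inequality this
is the contraction `(1 + κα) y (s + 1) ≤ y s + C`. Iterating along `T + n`, for a `T ≥ 0` all of
whose integer shifts are such starting times, forgets `y T` geometrically fast, and the energy
inequality on the unit window starting at `T + ⌊t - T⌋₊` transfers the bound from integer times to
all large `t`.
-/

open Set MeasureTheory Filter

theorem Real.exists_nonneg_forall_add_nat_of_ae {p : ℝ → Prop} (hp : ∀ᵐ t, p t) :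
    ∃ T, 0 ≤ T ∧ ∀ n : ℕ, p (T + n) := by
  have hshift : ∀ᵐ T, ∀ n : ℕ, p (T + n) := ae_all_iff.2 fun n =>
    (measurePreserving_add_right volume (n : ℝ)).quasiMeasurePreserving.ae hp
  have : (ae (volume.restrict (Ici (0 : ℝ)))).NeBot := ae_restrict_neBot.2 (by simp)
  exact ((ae_restrict_mem measurableSet_Ici).and (ae_restrict_of_ae hshift)).exists

theorem eventually_le_div_add_of_mul_succ_le {a : ℕ → ℝ} {c C ε : ℝ} (hc : 0 < c) (hε : 0 < ε)
    (hrec : ∀ n, (1 + c) * a (n + 1) ≤ a n + C) : ∀ᶠ n in atTop, a n ≤ C / c + ε := by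
  set b : ℕ → ℝ := fun n => a n - C / c
  have hb : ∀ n, b n ≤ b 0 * (1 + c)⁻¹ ^ n := by
    intro n
    induction n with
    | zero => simp
    | succ n ih =>
      have hstep : (1 + c) * b (n + 1) ≤ b n := by
        have := hrec n
        simp only [b]
        field_simp
        nlinarith
      rw [pow_succ, ← mul_assoc, le_mul_inv_iff₀ (by linarith), mul_comm]
      exact hstep.trans ih
  have hlim : Tendsto (fun n => b 0 * (1 + c)⁻¹ ^ n) atTop (nhds 0) := by
    simpa using (tendsto_pow_atTop_nhds_zero_of_lt_one (by positivity)
      (inv_lt_one_of_one_lt₀ (by linarith))).const_mul (b 0)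
  filter_upwards [hlim.eventually (gt_mem_nhds hε)] with n hn
  linarith [hb n]

def EnergyInequalityAt (κ ω : ℝ) (y h : ℝ → ℝ) (T : ℝ) : Prop :=
  ∀ τ ≥ (0 : ℝ), y (T + τ) - y T + κ * ∫ t in T..(T + τ), h t ≤ ω * τ

namespace EnergyInequalityAt

variable {κ ω α β : ℝ} {y h : ℝ → ℝ} {s t u : ℝ}

theorem sub_add_mul_integral_le (hE : EnergyInequalityAt κ ω y h s) (hst : s ≤ t) :
    y t - y s + κ * ∫ v in s..t, h v ≤ ω * (t - s) := by
  simpa using hE (t - s) (by linarith)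

theorem le_add_mul (hE : EnergyInequalityAt κ ω y h s) (hκ : 0 ≤ κ) (hh : ∀ v, 0 ≤ h v)
    (hst : s ≤ t) : y t ≤ y s + ω * (t - s) := by
  have hint : 0 ≤ ∫ v in s..t, h v := intervalIntegral.integral_nonneg hst fun v _ => hh v
  nlinarith [hE.sub_add_mul_integral_le hst, mul_nonneg hκ hint]

theorem mul_integral_le (hE : EnergyInequalityAt κ ω y h s) (hκ : 0 ≤ κ) (hh : ∀ v, 0 ≤ h v)
    (hint : IntervalIntegrable h volume s t) (hsu : s ≤ u) (hut : u ≤ t) (hy : 0 ≤ y t) :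
    κ * ∫ v in u..t, h v ≤ y s + ω * (t - s) := by
  have hmono : ∫ v in u..t, h v ≤ ∫ v in s..t, h v :=
    intervalIntegral.integral_mono_interval hsu hut le_rfl (ae_of_all _ hh) hint
  nlinarith [hE.sub_add_mul_integral_le (hsu.trans hut), mul_le_mul_of_nonneg_left hmono hκ]

theorem contraction (hE : EnergyInequalityAt κ ω y h s) (hκ : 0 ≤ κ) (hω : 0 ≤ ω) (hα : 0 ≤ α)
    (hh : ∀ v, 0 ≤ h v) (hint : IntervalIntegrable h volume s (s + 1))
    (hgood : ∀ᵐ t ∂volume.restrict (Icc s (s + 1)),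
      EnergyInequalityAt κ ω y h t ∧ α * y t - β ≤ h t) :
    (1 + κ * α) * y (s + 1) ≤ y s + (ω + κ * α * ω + κ * β) := by
  have hlower : α * (y (s + 1) - ω) - β ≤ ∫ v in s..(s + 1), h v := by
    have hpointwise :
        (fun _ => α * (y (s + 1) - ω) - β) ≤ᵐ[volume.restrict (Icc s (s + 1))] h := by
      filter_upwards [hgood, ae_restrict_mem measurableSet_Icc] with t ⟨hEt, hcoer⟩ ⟨_, hts⟩
      have hyt : y (s + 1) ≤ y t + ω := by
        nlinarith [hEt.le_add_mul hκ hh hts]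
      nlinarith [mul_le_mul_of_nonneg_left hyt hα]
    simpa using intervalIntegral.integral_mono_ae_restrict (by linarith)
      intervalIntegrable_const hint hpointwise
  nlinarith [hE.sub_add_mul_integral_le (le_add_of_nonneg_right zero_le_one),
    mul_le_mul_of_nonneg_left hlower hκ]

end EnergyInequalityAt

theorem stmt12_general (κ ω α β : ℝ) (hκ : 0 < κ) (hω : 0 < ω) (hα : 0 < α) :
    ∃ E E' : ℝ, ∀ y h : ℝ → ℝ,
      (∀ t, 0 ≤ y t) → (∀ t, 0 ≤ h t) →
      (∀ a b : ℝ, IntervalIntegrable h volume a b) →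
      (∀ᵐ T ∂(volume.restrict (Ici (0:ℝ))), ∀ τ ≥ (0:ℝ),
        y (T + τ) - y T + κ * ∫ t in T..(T + τ), h t ≤ ω * τ) →
      (∀ᵐ t ∂(volume.restrict (Ici (0:ℝ))), α * y t - β ≤ h t) →
      limsup y atTop ≤ E ∧
      limsup (fun T => ∫ t in T..(T + 1), h t) atTop ≤ E' := by
  set B := (ω + κ * α * ω + κ * β) / (κ * α) + 1
  refine ⟨B + ω, (B + 2 * ω) / κ, fun y h hy hh hint hE hcoer => ?_⟩
  have hgood : ∀ᵐ t, 0 ≤ t → EnergyInequalityAt κ ω y h t ∧ α * y t - β ≤ h t :=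
    (ae_restrict_iff' measurableSet_Ici).1 (hE.and hcoer)
  obtain ⟨T, hT, hTgood⟩ := Real.exists_nonneg_forall_add_nat_of_ae hgood
  have hET (n : ℕ) : EnergyInequalityAt κ ω y h (T + n) := (hTgood n (by positivity)).1
  have hgrid : ∀ᶠ n : ℕ in atTop, y (T + n) ≤ B := by
    refine eventually_le_div_add_of_mul_succ_le (mul_pos hκ hα) one_pos fun n => ?_
    rw [Nat.cast_succ, ← add_assoc]
    refine (hET n).contraction hκ.le hω.le hα.le hh (hint _ _) ?_
    filter_upwards [ae_restrict_of_ae hgood, ae_restrict_mem measurableSet_Icc] with t ht hts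
    exact ht (by linarith [hts.1, (n.cast_nonneg : (0 : ℝ) ≤ n)])
  have hwindow : ∀ᶠ t in atTop, T ≤ t ∧ y (T + ⌊t - T⌋₊) ≤ B :=
    (eventually_ge_atTop T).and <| (tendsto_nat_floor_atTop.comp
      (tendsto_atTop_add_const_right _ (-T) tendsto_id)).eventually hgrid
  have hbounds : ∀ᶠ t in atTop, y t ≤ B + ω ∧ ∫ v in t..(t + 1), h v ≤ (B + 2 * ω) / κ := by
    filter_upwards [hwindow] with t ⟨hTt, hyB⟩
    set s := T + ⌊t - T⌋₊
    have hst : s ≤ t := by linarith [Nat.floor_le (sub_nonneg.2 hTt)]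
    have hts : t < s + 1 := by linarith [Nat.lt_floor_add_one (t - T)]
    refine ⟨by nlinarith [(hET _).le_add_mul hκ.le hh hst], ?_⟩
    rw [le_div_iff₀ hκ, mul_comm]
    nlinarith [(hET _).mul_integral_le hκ.le hh (hint s (t + 1)) hst (by linarith) (hy (t + 1))]
  exact ⟨limsup_le_of_le (isCoboundedUnder_le_of_le atTop hy) (hbounds.mono fun _ => And.left),
    limsup_le_of_le (isCoboundedUnder_le_of_le atTop fun t =>
      intervalIntegral.integral_nonneg (by linarith) fun v _ => hh v)
      (hbounds.mono fun _ => And.right)⟩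

theorem stmt12 (κ ω α β : ℝ) (hκ : 0 < κ) (hω : 0 < ω) (hα : 0 < α) (hβ : 0 ≤ β) :
    ∃ E E' : ℝ, ∀ y h : ℝ → ℝ,
      (∀ t, 0 ≤ y t) → (∀ t, 0 ≤ h t) →
      (∀ a b : ℝ, IntervalIntegrable h volume a b) →
      (∀ᵐ T ∂(volume.restrict (Ici (0:ℝ))), ∀ τ ≥ (0:ℝ),
        y (T + τ) - y T + κ * ∫ t in T..(T + τ), h t ≤ ω * τ) →
      (∀ᵐ t ∂(volume.restrict (Ici (0:ℝ))), α * y t - β ≤ h t) →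
      limsup y atTop ≤ E ∧
      limsup (fun T => ∫ t in T..(T + 1), h t) atTop ≤ E' :=
  stmt12_general κ ω α β hκ hω hα
end
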